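/- arXiv:2312.13254 — 3 statements merged into one kernel-verified Lean document; each statement's English description precedes it below -/
import Mathlib

section
/- Suppose loss : ℝ → ℝ is convex and Lipschitz with argmin loss = {0}, δ > 1, and P(Z ≠ 0) > 0. If v_* ∈ H solves min_{v∈H : Gcal(v) ≤ 0} Lcal(v) with ‖v_*‖ > 0, then for any Lagrange multiplier μ_* > 0 satisfying the KKT condition at v_*, the positive scalars α_* = ‖v_*‖/√(1−δ⁻¹) and κ_* = ‖v_*‖/μ_* solve the nonlinear system, and moreover v_* = prox[κ_*·loss](α_* G + Z) − Z. -/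
open MeasureTheory ProbabilityTheory Real Set Filter

noncomputable section

/-- Subdifferential of a function `f : ℝ → ℝ` at `x`. -/
def subderiv (f : ℝ → ℝ) (x : ℝ) : Set ℝ :=
  {g : ℝ | ∀ y : ℝ, f x + g * (y - x) ≤ f y}

/-- Moreau envelope `env_f(x; τ)`. -/
def moreau (f : ℝ → ℝ) (τ x : ℝ) : ℝ :=
  ⨅ u : ℝ, ((x - u) ^ 2 / (2 * τ) + f u)

/-- Proximal operator `prox[τ·f](x)`, the minimizer of `u ↦ τ f(u) + (x-u)²/2`. -/
def prox (τ : ℝ) (f : ℝ → ℝ) (x : ℝ) : ℝ :=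
  Classical.epsilon fun u : ℝ =>
    ∀ y : ℝ, τ * f u + (x - u) ^ 2 / 2 ≤ τ * f y + (x - y) ^ 2 / 2

/-- Joint law of `(G, W)` where `G ~ N(0,1)` is independent of `W ~ ζ`. -/
def nu (ζ : Measure ℝ) : Measure (ℝ × ℝ) :=
  (gaussianReal 0 1).prod ζ

/-- The set of global minimizers of `f` is `{0}`. -/
def argminIsZero (f : ℝ → ℝ) : Prop :=
  {x : ℝ | ∀ y : ℝ, f x ≤ f y} = {0}

/-- `f` is Lipschitz. -/
def LipschitzFun (f : ℝ → ℝ) : Prop := ∃ K : NNReal, LipschitzWith K f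

/-- `L(c, τ) = E[env_loss(c·G + Z; τ) − loss(Z)]`. -/
def Lfun (ζ : Measure ℝ) (loss : ℝ → ℝ) (c τ : ℝ) : ℝ :=
  ∫ p : ℝ × ℝ, (moreau loss τ (c * p.1 + p.2) - loss p.2) ∂(nu ζ)

/-- Unregularized potential `M(α)`. -/
def Mpot (ζ : Measure ℝ) (loss : ℝ → ℝ) (δ α : ℝ) : ℝ :=
  ⨆ β : Ioi (0:ℝ), ⨅ τg : Ioi (0:ℝ),
    ((β : ℝ) * (τg : ℝ) / (2 * δ) + Lfun ζ loss α ((τg : ℝ) / (β : ℝ)) - α * (β : ℝ) / δ)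

/-- Membership in the Hilbert space `H` of square integrable functions of `(G, Z)`. -/
def inH (ζ : Measure ℝ) (v : ℝ × ℝ → ℝ) : Prop :=
  MemLp v 2 (nu ζ)

/-- Hilbert norm `‖v‖ = E[v²]^{1/2}`. -/
def hnorm (ζ : Measure ℝ) (v : ℝ × ℝ → ℝ) : ℝ :=
  Real.sqrt (∫ p : ℝ × ℝ, (v p) ^ 2 ∂(nu ζ))

/-- `Lcal(v) = E[loss(v + Z) − loss(Z)]`. -/
def Lcal (ζ : Measure ℝ) (loss : ℝ → ℝ) (v : ℝ × ℝ → ℝ) : ℝ :=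
  ∫ p : ℝ × ℝ, (loss (v p + p.2) - loss p.2) ∂(nu ζ)

/-- `Gcal(v) = ‖v‖ − E[v·G]/√(1 − δ⁻¹)`. -/
def Gcal (ζ : Measure ℝ) (δ : ℝ) (v : ℝ × ℝ → ℝ) : ℝ :=
  hnorm ζ v - (∫ p : ℝ × ℝ, v p * p.1 ∂(nu ζ)) / Real.sqrt (1 - δ⁻¹)

/-- `v` solves `min_{v ∈ H, Gcal(v) ≤ 0} Lcal(v)`. -/
def SolvesConstrained (ζ : Measure ℝ) (loss : ℝ → ℝ) (δ : ℝ) (v : ℝ × ℝ → ℝ) : Prop :=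
  inH ζ v ∧ Gcal ζ δ v ≤ 0 ∧
    ∀ u : ℝ × ℝ → ℝ, inH ζ u → Gcal ζ δ u ≤ 0 → Lcal ζ loss v ≤ Lcal ζ loss u

/-- Subdifferential of a functional `F : H → ℝ` at `v`, as a subset of `H`. -/
def subdiffH (ζ : Measure ℝ) (F : (ℝ × ℝ → ℝ) → ℝ) (v : ℝ × ℝ → ℝ) : Set (ℝ × ℝ → ℝ) :=
  {g | inH ζ g ∧ ∀ u : ℝ × ℝ → ℝ, inH ζ u →
    F v + ∫ p : ℝ × ℝ, g p * (u p - v p) ∂(nu ζ) ≤ F u}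

/-- KKT condition at `v` with multiplier `μ`:
`(−μ)·∂Gcal(v) ∩ ∂Lcal(v) ≠ ∅`, `μ·Gcal(v) = 0`, `Gcal(v) ≤ 0`. -/
def KKT (ζ : Measure ℝ) (loss : ℝ → ℝ) (δ μ : ℝ) (v : ℝ × ℝ → ℝ) : Prop :=
  (∃ h ∈ subdiffH ζ (Gcal ζ δ) v, (fun p => -μ * h p) ∈ subdiffH ζ (Lcal ζ loss) v) ∧
    μ * Gcal ζ δ v = 0 ∧ Gcal ζ δ v ≤ 0

/-- The two-equation nonlinear system with unknowns `(α, κ)`. -/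
def solvesSystem (ζ : Measure ℝ) (loss : ℝ → ℝ) (δ α κ : ℝ) : Prop :=
  α ^ 2 = δ * ∫ p : ℝ × ℝ,
      ((α * p.1 + p.2) - prox κ loss (α * p.1 + p.2)) ^ 2 ∂(nu ζ) ∧
  α = δ * ∫ p : ℝ × ℝ,
      ((α * p.1 + p.2) - prox κ loss (α * p.1 + p.2)) * p.1 ∂(nu ζ)

/-- Threshold `δ_perfect = 1/(1 − inf_{t>0} E[dist(G, t·∂loss(Z))²])₊ ∈ (0, ∞]`. -/
def deltaPerfect (ζ : Measure ℝ) (loss : ℝ → ℝ) : ENNReal :=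
  1 / ENNReal.ofReal
    (1 - ⨅ t : Ioi (0:ℝ),
      ∫ p : ℝ × ℝ, (Metric.infDist p.1 ((fun g => (t : ℝ) * g) '' subderiv loss p.2)) ^ 2 ∂(nu ζ))

/-!
Write `r = ‖v‖` and `s = √(1 - δ⁻¹)`. In `L²`, `Gcal` is the norm minus the linear form
`⟪·, G⟫ / s`, and a subgradient `k` of the norm at `v ≠ 0` must be `v / r`: testing at `0` gives
`⟪k, v⟫ ≥ r`, testing at `v + k` gives `‖k‖ ≤ 1`, hence `‖k - v / r‖² ≤ 0`. So the KKT subgradient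
of `Gcal` is `h = v / r - G / s`. Testing the subgradient inequality of `Lcal` against perturbations
of `v` by a constant on a measurable set shows that `-μ h` is almost surely a subgradient of `loss`
at `v + Z`, i.e. `v + Z = prox[κ loss](v + Z - κ μ h) = prox[κ loss](α G + Z)`. Complementary
slackness gives `E[v G] = r s`, and the two equations follow by expanding `E[(α G - v)²]` and
`E[(α G - v) G]` with `E[G²] = 1`.
-/

theorem eq_inv_norm_smul_of_forall_inner_sub_le {E : Type*} [NormedAddCommGroup E]
    [InnerProductSpace ℝ E] {k v : E} (hv : v ≠ 0)
    (hk : ∀ w, inner ℝ k (w - v) ≤ ‖w‖ - ‖v‖) : k = ‖v‖⁻¹ • v := by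
  have hr : 0 < ‖v‖ := norm_pos_iff.2 hv
  have hkv : 1 ≤ ‖v‖⁻¹ * inner ℝ k v := by
    rw [le_inv_mul_iff₀ hr, mul_one]
    simpa [inner_neg_right] using hk 0
  have hk1 : ‖k‖ ≤ 1 := by
    have h := hk (k + v)
    rw [add_sub_cancel_right, real_inner_self_eq_norm_sq] at h
    nlinarith [norm_add_le k v, norm_nonneg k]
  have h : ‖k - ‖v‖⁻¹ • v‖ ^ 2 ≤ 0 := by
    rw [norm_sub_sq_real, inner_smul_right, norm_smul, norm_inv, norm_norm,
      inv_mul_cancel₀ hr.ne']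
    nlinarith [norm_nonneg k]
  rw [← sub_eq_zero, ← norm_eq_zero]
  nlinarith [norm_nonneg (k - ‖v‖⁻¹ • v)]

section L2

variable {Ω : Type*} [MeasurableSpace Ω] {μ : Measure Ω} {f g : Ω → ℝ}

theorem integral_mul_eq_inner_toLp (hf : MemLp f 2 μ) (hg : MemLp g 2 μ) :
    ∫ x, f x * g x ∂μ = inner ℝ (hf.toLp f) (hg.toLp g) := by
  rw [L2.inner_def]
  refine integral_congr_ae ?_
  filter_upwards [hf.coeFn_toLp, hg.coeFn_toLp] with x hfx hgx
  rw [hfx, hgx, Real.inner_apply]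

theorem sqrt_integral_sq_eq_norm_toLp (hf : MemLp f 2 μ) :
    √(∫ x, f x ^ 2 ∂μ) = ‖hf.toLp f‖ := by
  simp_rw [sq, integral_mul_eq_inner_toLp hf hf, norm_eq_sqrt_real_inner]

end L2

theorem integral_sq_gaussianReal_zero (v : NNReal) : ∫ x, x ^ 2 ∂gaussianReal 0 v = v := by
  simpa [variance_eq_integral measurable_id'.aemeasurable] using
    variance_fun_id_gaussianReal (μ := 0) (v := v)

theorem mem_subderiv_of_forall_rat {f : ℝ → ℝ} (hf : Continuous f) {x g : ℝ}
    (h : ∀ q : ℚ, f x + g * q ≤ f (x + q)) : g ∈ subderiv f x := by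
  have hclosed : IsClosed {c : ℝ | f x + g * c ≤ f (x + c)} :=
    isClosed_le (by fun_prop) (by fun_prop)
  have hall : ∀ c : ℝ, f x + g * c ≤ f (x + c) := fun c =>
    Rat.denseRange_cast.induction_on c hclosed h
  intro y
  simpa using hall (y - x)

theorem prox_eq_of_mem_subderiv {f : ℝ → ℝ} {τ u g : ℝ} (hτ : 0 < τ) (hg : g ∈ subderiv f u) :
    prox τ f (u + τ * g) = u := by
  have hu : ∀ y, τ * f u + (u + τ * g - u) ^ 2 / 2 + (y - u) ^ 2 / 2
      ≤ τ * f y + (u + τ * g - y) ^ 2 / 2 := fun y => by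
    nlinarith [mul_le_mul_of_nonneg_left (hg y) hτ.le]
  have hw : ∀ y, τ * f (prox τ f (u + τ * g)) + (u + τ * g - prox τ f (u + τ * g)) ^ 2 / 2
      ≤ τ * f y + (u + τ * g - y) ^ 2 / 2 :=
    Classical.epsilon_spec (p := fun w => ∀ y : ℝ,
      τ * f w + (u + τ * g - w) ^ 2 / 2 ≤ τ * f y + (u + τ * g - y) ^ 2 / 2)
      ⟨u, fun y => by linarith [hu y, sq_nonneg (y - u)]⟩
  have hsq : (prox τ f (u + τ * g) - u) ^ 2 ≤ 0 := by
    linarith [hw u, hu (prox τ f (u + τ * g))]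
  exact sub_eq_zero.1 (pow_eq_zero_iff two_ne_zero |>.1 (le_antisymm hsq (sq_nonneg _)))

section Lipschitz

variable {Ω : Type*} [MeasurableSpace Ω] {μ : Measure Ω} {f : ℝ → ℝ} {K : NNReal}

theorem LipschitzWith.integrable_comp_add_sub_comp (hf : LipschitzWith K f) {w z : Ω → ℝ}
    (hw : Integrable w μ) (hz : AEStronglyMeasurable z μ) :
    Integrable (fun p => f (w p + z p) - f (z p)) μ := by
  refine (hw.norm.const_mul K).mono'
    ((hf.continuous.comp_aestronglyMeasurable (hw.1.add hz)).sub
      (hf.continuous.comp_aestronglyMeasurable hz)) (Eventually.of_forall fun p => ?_)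
  simpa [Real.dist_eq] using hf.dist_le_mul (w p + z p) (z p)

theorem LipschitzWith.ae_mem_subderiv_of_forall_setIntegral_le [IsFiniteMeasure μ]
    (hf : LipschitzWith K f) {x g : Ω → ℝ} (hx : AEStronglyMeasurable x μ)
    (hg : Integrable g μ) (h : ∀ (c : ℝ) (A : Set Ω), MeasurableSet A →
      ∫ p in A, g p * c ∂μ ≤ ∫ p in A, (f (x p + c) - f (x p)) ∂μ) :
    ∀ᵐ p ∂μ, g p ∈ subderiv f (x p) := by
  have hc : ∀ c : ℝ, ∀ᵐ p ∂μ, f (x p) + g p * c ≤ f (x p + c) := fun c => by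
    have hint : Integrable (fun p => f (x p + c) - f (x p)) μ := by
      simpa only [add_comm c] using hf.integrable_comp_add_sub_comp (integrable_const c) hx
    have hdiff : Integrable (fun p => f (x p + c) - f (x p) - g p * c) μ :=
      hint.sub (hg.mul_const c)
    filter_upwards [ae_nonneg_of_forall_setIntegral_nonneg hdiff fun A hA _ => by
        rw [integral_sub hint.integrableOn (hg.mul_const c).integrableOn]
        linarith [h c A hA]] with p hp
    linarith [show 0 ≤ f (x p + c) - f (x p) - g p * c from hp]
  filter_upwards [ae_all_iff.2 fun q : ℚ => hc q] with p hp
  exact mem_subderiv_of_forall_rat hf.continuous hp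

end Lipschitz

section Model

variable {ζ : Measure ℝ}

theorem hnorm_eq_norm_toLp {u : ℝ × ℝ → ℝ} (hu : MemLp u 2 (nu ζ)) :
    hnorm ζ u = ‖hu.toLp u‖ :=
  sqrt_integral_sq_eq_norm_toLp hu

theorem integral_mul_fst_eq_of_Gcal_eq_zero {δ : ℝ} (hδ : 1 < δ) {v : ℝ × ℝ → ℝ}
    (hGv : Gcal ζ δ v = 0) : ∫ p, v p * p.1 ∂(nu ζ) = hnorm ζ v * √(1 - δ⁻¹) := by
  have hs : √(1 - δ⁻¹) ≠ 0 := (Real.sqrt_pos.2 (sub_pos.2 (inv_lt_one_of_one_lt₀ hδ))).ne'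
  rw [Gcal, sub_eq_zero, eq_div_iff hs] at hGv
  exact hGv.symm

variable [IsProbabilityMeasure ζ]

instance : IsProbabilityMeasure (nu ζ) := by
  unfold nu; infer_instance

theorem memLp_fst_nu : MemLp (fun p : ℝ × ℝ => p.1) 2 (nu ζ) :=
  (memLp_id_gaussianReal 2).comp_measurePreserving measurePreserving_fst

theorem integral_fst_sq_nu : ∫ p, p.1 ^ 2 ∂(nu ζ) = 1 := by
  rw [nu, integral_fun_fst (fun x : ℝ => x ^ 2), integral_sq_gaussianReal_zero]
  simp

theorem Gcal_eq_norm_sub_inner_toLp (δ : ℝ) {u : ℝ × ℝ → ℝ} (hu : MemLp u 2 (nu ζ)) :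
    Gcal ζ δ u = ‖hu.toLp u‖ - inner ℝ (hu.toLp u) (memLp_fst_nu.toLp _) / √(1 - δ⁻¹) := by
  rw [Gcal, hnorm_eq_norm_toLp hu, integral_mul_eq_inner_toLp hu memLp_fst_nu]

theorem ae_eq_of_mem_subdiffH_Gcal {δ : ℝ} {v h : ℝ × ℝ → ℝ} (hv : MemLp v 2 (nu ζ))
    (hv0 : 0 < hnorm ζ v) (hh : h ∈ subdiffH ζ (Gcal ζ δ) v) :
    h =ᵐ[nu ζ] fun p => (hnorm ζ v)⁻¹ * v p - p.1 / √(1 - δ⁻¹) := by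
  obtain ⟨hh : MemLp h 2 (nu ζ), hsub⟩ := hh
  have hG := memLp_fst_nu (ζ := ζ)
  rw [hnorm_eq_norm_toLp hv] at hv0 ⊢
  have key : hh.toLp h + (√(1 - δ⁻¹))⁻¹ • hG.toLp _ = ‖hv.toLp v‖⁻¹ • hv.toLp v := by
    refine eq_inv_norm_smul_of_forall_inner_sub_le (norm_pos_iff.1 hv0) fun w => ?_
    have hw := hsub w (Lp.memLp w)
    have hint := integral_mul_eq_inner_toLp hh ((Lp.memLp w).sub hv)
    rw [MemLp.toLp_sub (Lp.memLp w) hv, Lp.toLp_coeFn] at hint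
    rw [Gcal_eq_norm_sub_inner_toLp δ hv, Gcal_eq_norm_sub_inner_toLp δ (Lp.memLp w),
      Lp.toLp_coeFn, real_inner_comm (hG.toLp _), real_inner_comm (hG.toLp _)] at hw
    simp only [Pi.sub_apply] at hint
    rw [hint] at hw
    simp only [div_eq_mul_inv, inner_sub_right] at hw
    simp only [inner_add_left, real_inner_smul_left, inner_sub_right]
    linarith
  have hLp : hh.toLp h
      = ((hv.const_smul ‖hv.toLp v‖⁻¹).sub (hG.const_smul (√(1 - δ⁻¹))⁻¹)).toLp _ := by
    rw [MemLp.toLp_sub (hv.const_smul _) (hG.const_smul _), MemLp.toLp_const_smul _ hv,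
      MemLp.toLp_const_smul _ hG, ← key, add_sub_cancel_right]
  filter_upwards [(MemLp.toLp_eq_toLp_iff _ _).1 hLp] with p hp
  rw [hp]
  simp [div_eq_mul_inv, mul_comm]

theorem ae_mem_subderiv_of_mem_subdiffH_Lcal {loss : ℝ → ℝ} {K : NNReal}
    (hK : LipschitzWith K loss) {v g : ℝ × ℝ → ℝ} (hv : MemLp v 2 (nu ζ))
    (hg : g ∈ subdiffH ζ (Lcal ζ loss) v) :
    ∀ᵐ p ∂(nu ζ), g p ∈ subderiv loss (v p + p.2) := by
  have hZ : AEStronglyMeasurable (fun p : ℝ × ℝ => p.2) (nu ζ) :=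
    measurable_snd.aestronglyMeasurable
  refine hK.ae_mem_subderiv_of_forall_setIntegral_le (hv.aestronglyMeasurable.add hZ)
    (hg.1.integrable one_le_two) fun c A hA => ?_
  set u := fun p => v p + A.indicator (fun _ => c) p
  have hu : MemLp u 2 (nu ζ) := hv.add ((memLp_const c).indicator hA)
  have hlin : ∫ p, g p * (u p - v p) ∂(nu ζ) = ∫ p in A, g p * c ∂(nu ζ) := by
    rw [← integral_indicator hA]
    congr 1 with p
    by_cases hp : p ∈ A <;> simp [u, hp]
  have hL : Lcal ζ loss u - Lcal ζ loss v
      = ∫ p in A, (loss (v p + p.2 + c) - loss (v p + p.2)) ∂(nu ζ) := by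
    rw [Lcal, Lcal, ← integral_sub (hK.integrable_comp_add_sub_comp (hu.integrable one_le_two) hZ)
      (hK.integrable_comp_add_sub_comp (hv.integrable one_le_two) hZ), ← integral_indicator hA]
    congr 1 with p
    by_cases hp : p ∈ A <;> simp [u, hp, add_right_comm]
  linarith [hg.2 u hu]

theorem solvesSystem_of_ae_prox_eq {loss : ℝ → ℝ} {δ α κ : ℝ} (hδ : 1 < δ)
    {v : ℝ × ℝ → ℝ} (hv : MemLp v 2 (nu ζ)) (hα : hnorm ζ v = α * √(1 - δ⁻¹))
    (hvG : ∫ p, v p * p.1 ∂(nu ζ) = hnorm ζ v * √(1 - δ⁻¹))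
    (hprox : ∀ᵐ p ∂(nu ζ), prox κ loss (α * p.1 + p.2) = v p + p.2) :
    solvesSystem ζ loss δ α κ := by
  have hs2 : √(1 - δ⁻¹) ^ 2 = 1 - δ⁻¹ :=
    Real.sq_sqrt (sub_pos.2 (inv_lt_one_of_one_lt₀ hδ)).le
  have hv2 : ∫ p, v p ^ 2 ∂(nu ζ) = α ^ 2 * (1 - δ⁻¹) := by
    rw [← Real.sq_sqrt (integral_nonneg fun p => sq_nonneg (v p)), ← hnorm, hα, mul_pow, hs2]
  rw [hα, mul_assoc, ← sq, hs2] at hvG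
  have hG2 : Integrable (fun p : ℝ × ℝ => p.1 ^ 2) (nu ζ) := memLp_fst_nu.integrable_sq
  have hGv : Integrable (fun p => v p * p.1) (nu ζ) := hv.integrable_mul memLp_fst_nu
  have hcross : Integrable (fun p => α ^ 2 * p.1 ^ 2 - 2 * α * (v p * p.1)) (nu ζ) :=
    (hG2.const_mul _).sub (hGv.const_mul _)
  have hδ0 : δ ≠ 0 := by positivity
  constructor
  · calc α ^ 2 = δ * (α ^ 2 * 1 - 2 * α * (α * (1 - δ⁻¹)) + α ^ 2 * (1 - δ⁻¹)) := by
          field_simp; ring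
      _ = δ * ∫ p, (α ^ 2 * p.1 ^ 2 - 2 * α * (v p * p.1) + v p ^ 2) ∂(nu ζ) := by
          rw [integral_add hcross hv.integrable_sq,
            integral_sub (hG2.const_mul _) (hGv.const_mul _), integral_const_mul,
            integral_const_mul, integral_fst_sq_nu, hvG, hv2]
      _ = _ := by
          congr 1
          exact integral_congr_ae (hprox.mono fun p hp => by simp only [hp]; ring)
  · calc α = δ * (α * 1 - α * (1 - δ⁻¹)) := by field_simp; ring
      _ = δ * ∫ p, (α * p.1 ^ 2 - v p * p.1) ∂(nu ζ) := by
          rw [integral_sub (hG2.const_mul _) hGv, integral_const_mul, integral_fst_sq_nu, hvG]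
      _ = _ := by
          congr 1
          exact integral_congr_ae (hprox.mono fun p hp => by simp only [hp]; ring)

end Model

theorem stmt4_general (ζ : Measure ℝ) [IsProbabilityMeasure ζ] (loss : ℝ → ℝ) (δ : ℝ)
    (hlip : LipschitzFun loss) (hδ : 1 < δ)
    (v : ℝ × ℝ → ℝ) (hv : SolvesConstrained ζ loss δ v) (hvpos : 0 < hnorm ζ v)
    (μ : ℝ) (hμ : 0 < μ) (hKKT : KKT ζ loss δ μ v) :
    0 < hnorm ζ v / Real.sqrt (1 - δ⁻¹) ∧ 0 < hnorm ζ v / μ ∧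
    solvesSystem ζ loss δ (hnorm ζ v / Real.sqrt (1 - δ⁻¹)) (hnorm ζ v / μ) ∧
    v =ᵐ[nu ζ] fun p =>
      prox (hnorm ζ v / μ) loss ((hnorm ζ v / Real.sqrt (1 - δ⁻¹)) * p.1 + p.2) - p.2 := by
  obtain ⟨K, hK⟩ := hlip
  obtain ⟨hvH : MemLp v 2 (nu ζ), -⟩ := hv
  obtain ⟨⟨h, hG, hL⟩, hslack, -⟩ := hKKT
  have hh := ae_eq_of_mem_subdiffH_Gcal hvH hvpos hG
  have hvG := integral_mul_fst_eq_of_Gcal_eq_zero hδ ((mul_eq_zero.1 hslack).resolve_left hμ.ne')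
  set r := hnorm ζ v
  set s := √(1 - δ⁻¹)
  have hs : 0 < s := Real.sqrt_pos.2 (sub_pos.2 (inv_lt_one_of_one_lt₀ hδ))
  have hκ : 0 < r / μ := div_pos hvpos hμ
  have hprox : ∀ᵐ p ∂(nu ζ), prox (r / μ) loss (r / s * p.1 + p.2) = v p + p.2 := by
    filter_upwards [hh, ae_mem_subderiv_of_mem_subdiffH_Lcal hK hvH hL] with p hp hsub
    convert prox_eq_of_mem_subderiv hκ hsub using 2
    rw [hp]
    field_simp
    ring
  refine ⟨div_pos hvpos hs, hκ,
    solvesSystem_of_ae_prox_eq hδ hvH (div_mul_cancel₀ r hs.ne').symm hvG hprox, ?_⟩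
  filter_upwards [hprox] with p hp
  rw [hp, add_sub_cancel_right]

/-- from a nonzero minimizer `v_*` of the constrained problem and any Lagrange
multiplier `μ_* > 0` satisfying the KKT condition, the scalars `α_* = ‖v_*‖/√(1−δ⁻¹)` and
`κ_* = ‖v_*‖/μ_*` solve the nonlinear system, and `v_* = prox[κ_* loss](α_* G + Z) − Z`. -/
theorem stmt4 (ζ : Measure ℝ) [IsProbabilityMeasure ζ] (loss : ℝ → ℝ) (δ : ℝ)
    (hconv : ConvexOn ℝ Set.univ loss) (hlip : LipschitzFun loss)
    (hmin : argminIsZero loss) (hδ : 1 < δ) (hZ : 0 < ζ {x : ℝ | x ≠ 0})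
    (v : ℝ × ℝ → ℝ) (hv : SolvesConstrained ζ loss δ v) (hvpos : 0 < hnorm ζ v)
    (μ : ℝ) (hμ : 0 < μ) (hKKT : KKT ζ loss δ μ v) :
    0 < hnorm ζ v / Real.sqrt (1 - δ⁻¹) ∧ 0 < hnorm ζ v / μ ∧
    solvesSystem ζ loss δ (hnorm ζ v / Real.sqrt (1 - δ⁻¹)) (hnorm ζ v / μ) ∧
    v =ᵐ[nu ζ] fun p =>
      prox (hnorm ζ v / μ) loss ((hnorm ζ v / Real.sqrt (1 - δ⁻¹)) * p.1 + p.2) - p.2 :=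
  stmt4_general ζ loss δ hlip hδ v hv hvpos μ hμ hKKT

end
end

section
/- Suppose loss : ℝ → ℝ is convex and Lipschitz with argmin loss = {0}, δ > 1, and P(Z ≠ 0) > 0. Then there exist positive constants C₁ and C₂, depending only on loss, the law of Z, and δ, such that Lcal(v) ≥ C₁·‖v‖ − C₂ for every v ∈ H with Gcal(v) ≤ 0. -/
open MeasureTheory ProbabilityTheory Real Set Filter

noncomputable section

/-! The constraint `Gcal v ≤ 0` says that `v` correlates with `G` at least as much as
`√(1 - δ⁻¹) ‖v‖`. Off the event `|G| > M` this correlation is at most `M E|v|`, and for `M`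
large the `L²` mass of `G` on that event is small, so `E|v| ≥ κ ‖v‖`. A convex `loss` with unique
minimizer `0` grows linearly, `loss x ≥ loss 0 + c (|x| - 1)`, so
`loss (v + Z) - loss Z ≥ c |v| - const` where `|Z| ≤ R`; on the rare event `|Z| > R` the
Lipschitz bound `-K |v|` costs, by Cauchy–Schwarz, only a small multiple of `‖v‖`. -/

open scoped Topology NNReal

section L2

variable {Ω : Type*} [MeasurableSpace Ω] {μ : Measure Ω}

theorem integral_abs_mul_abs_le_sqrt_mul_sqrt {f g : Ω → ℝ} (hf : MemLp f 2 μ)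
    (hg : MemLp g 2 μ) :
    ∫ ω, |f ω| * |g ω| ∂μ ≤ √(∫ ω, f ω ^ 2 ∂μ) * √(∫ ω, g ω ^ 2 ∂μ) := by
  have h2 : ENNReal.ofReal 2 = 2 := by norm_num
  have := integral_mul_le_Lp_mul_Lq_of_nonneg Real.HolderConjugate.two_two
    (Eventually.of_forall fun ω => abs_nonneg (f ω))
    (Eventually.of_forall fun ω => abs_nonneg (g ω)) (h2 ▸ hf.abs) (h2 ▸ hg.abs)
  simpa only [Real.rpow_two, sq_abs, ← Real.sqrt_eq_rpow] using this

theorem setIntegral_abs_mul_abs_le {f g : Ω → ℝ} (hf : MemLp f 2 μ) (hg : MemLp g 2 μ)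
    (s : Set Ω) :
    ∫ ω in s, |f ω| * |g ω| ∂μ ≤ √(∫ ω, f ω ^ 2 ∂μ) * √(∫ ω in s, g ω ^ 2 ∂μ) :=
  (integral_abs_mul_abs_le_sqrt_mul_sqrt (hf.restrict s) (hg.restrict s)).trans <|
    mul_le_mul_of_nonneg_right (Real.sqrt_le_sqrt (setIntegral_le_integral
      hf.integrable_sq (Eventually.of_forall fun ω => sq_nonneg (f ω)))) (Real.sqrt_nonneg _)

theorem tendsto_setIntegral_lt_abs_atTop {X : Ω → ℝ} (hX : Measurable X) {f : Ω → ℝ}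
    (hf : Integrable f μ) :
    Tendsto (fun R : ℝ => ∫ ω in {ω | R < |X ω|}, f ω ∂μ) atTop (𝓝 0) := by
  have hanti : Antitone fun R : ℝ => {ω | R < |X ω|} :=
    fun R R' hRR' ω hω => lt_of_le_of_lt hRR' hω
  have hempty : (⋂ R : ℝ, {ω | R < |X ω|}) = ∅ :=
    eq_empty_of_forall_notMem fun ω hω => lt_irrefl |X ω| (mem_iInter.1 hω |X ω|)
  simpa [hempty] using tendsto_setIntegral_of_antitone
    (fun R => measurableSet_lt measurable_const hX.abs) hanti ⟨0, hf.integrableOn⟩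

theorem exists_pos_mul_sqrt_integral_sq_le_integral_abs [IsFiniteMeasure μ] {g : Ω → ℝ}
    (hgm : Measurable g) (hg : MemLp g 2 μ) {s : ℝ} (hs : 0 < s) :
    ∃ κ > 0, ∀ v : Ω → ℝ, MemLp v 2 μ → s * √(∫ ω, v ω ^ 2 ∂μ) ≤ ∫ ω, v ω * g ω ∂μ →
      κ * √(∫ ω, v ω ^ 2 ∂μ) ≤ ∫ ω, |v ω| ∂μ := by
  obtain ⟨M, hMtail, hM⟩ := (((tendsto_setIntegral_lt_abs_atTop hgm hg.integrable_sq)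
    |>.eventually_lt_const (show 0 < (s / 2) ^ 2 by positivity)).and (eventually_gt_atTop 0)).exists
  refine ⟨s / (2 * M), by positivity, fun v hv hcone => ?_⟩
  set S := {ω | M < |g ω|}
  set N := √(∫ ω, v ω ^ 2 ∂μ)
  have hS : MeasurableSet S := measurableSet_lt measurable_const hgm.abs
  have hvg : Integrable (fun ω => |v ω| * |g ω|) μ := hv.abs.integrable_mul hg.abs
  have htail : ∫ ω in S, |v ω| * |g ω| ∂μ ≤ N * (s / 2) :=
    (setIntegral_abs_mul_abs_le hv hg S).trans (mul_le_mul_of_nonneg_left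
      ((Real.sqrt_le_sqrt hMtail.le).trans_eq (Real.sqrt_sq (by positivity))) (Real.sqrt_nonneg _))
  have hsplit : ∀ ω, v ω * g ω ≤ M * |v ω| + S.indicator (fun ω => |v ω| * |g ω|) ω := by
    intro ω
    have hvg_le : v ω * g ω ≤ |v ω| * |g ω| := (le_abs_self _).trans_eq (abs_mul _ _)
    by_cases hω : ω ∈ S
    · rw [indicator_of_mem hω]
      nlinarith [abs_nonneg (v ω)]
    · rw [indicator_of_notMem hω, add_zero]
      nlinarith [abs_nonneg (v ω), not_lt.1 (show ¬M < |g ω| from hω)]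
  have hL1 : ∫ ω, v ω * g ω ∂μ ≤ M * ∫ ω, |v ω| ∂μ + N * (s / 2) :=
    calc ∫ ω, v ω * g ω ∂μ
        ≤ ∫ ω, (M * |v ω| + S.indicator (fun ω => |v ω| * |g ω|) ω) ∂μ :=
          integral_mono (hv.integrable_mul hg) ((hv.integrable one_le_two).abs.const_mul M
            |>.add (hvg.indicator hS)) hsplit
      _ = M * ∫ ω, |v ω| ∂μ + ∫ ω in S, |v ω| * |g ω| ∂μ := by
          rw [integral_add ((hv.integrable one_le_two).abs.const_mul M) (hvg.indicator hS),
            integral_const_mul, integral_indicator hS]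
      _ ≤ M * ∫ ω, |v ω| ∂μ + N * (s / 2) := by linarith
  rw [div_mul_eq_mul_div, div_le_iff₀ (by positivity)]
  linarith

theorem exists_setIntegral_lt_abs_le_mul_sqrt [IsFiniteMeasure μ] {X : Ω → ℝ}
    (hX : Measurable X) {ε : ℝ} (hε : 0 < ε) :
    ∃ R ≥ 0, ∀ v : Ω → ℝ, MemLp v 2 μ →
      ∫ ω in {ω | R < |X ω|}, |v ω| ∂μ ≤ ε * √(∫ ω, v ω ^ 2 ∂μ) := by
  obtain ⟨R, hRtail, hR⟩ := (((tendsto_setIntegral_lt_abs_atTop (μ := μ) hX (integrable_const 1))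
    |>.eventually_lt_const (show 0 < ε ^ 2 by positivity)).and (eventually_ge_atTop 0)).exists
  refine ⟨R, hR, fun v hv => ?_⟩
  have := setIntegral_abs_mul_abs_le hv (memLp_const (1 : ℝ)) {ω | R < |X ω|}
  simp only [abs_one, mul_one, one_pow] at this
  rw [mul_comm ε]
  exact this.trans (mul_le_mul_of_nonneg_left
    ((Real.sqrt_le_sqrt hRtail.le).trans_eq (Real.sqrt_sq hε.le)) (Real.sqrt_nonneg _))

end L2

theorem ConvexOn.exists_pos_add_mul_abs_sub_one_le {f : ℝ → ℝ} (hf : ConvexOn ℝ univ f)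
    (hmin : argminIsZero f) : ∃ c > 0, ∀ x, f 0 + c * (|x| - 1) ≤ f x := by
  have hle : ∀ y, f 0 ≤ f y := (hmin ▸ mem_singleton 0 : (0 : ℝ) ∈ {x | ∀ y, f x ≤ f y})
  have hlt : ∀ x ≠ 0, f 0 < f x := fun x hx => (hle x).lt_of_ne fun h => hx <| by
    have : x ∈ {x : ℝ | ∀ y, f x ≤ f y} := fun y => h ▸ hle y
    rwa [hmin] at this
  set c := min (f 1 - f 0) (f (-1) - f 0)
  have hc : 0 < c := lt_min (sub_pos.2 (hlt 1 one_ne_zero)) (sub_pos.2 (hlt (-1) (by norm_num)))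
  refine ⟨c, hc, fun x => ?_⟩
  rcases le_or_gt |x| 1 with hx | hx
  · nlinarith [hle x]
  rcases lt_abs.1 hx with hx | hx
  · have hslope := hf.secant_mono (a := 0) trivial trivial trivial one_ne_zero (by linarith) hx.le
    rw [sub_zero, sub_zero, div_one, le_div_iff₀ (by linarith)] at hslope
    rw [abs_of_pos (by linarith)]
    nlinarith [min_le_left (f 1 - f 0) (f (-1) - f 0)]
  · have hslope := hf.secant_mono (a := 0) (y := -1) trivial trivial trivial (by linarith)
      (by norm_num) (by linarith)
    rw [sub_zero, sub_zero, div_neg, div_one, div_le_iff_of_neg (by linarith)] at hslope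
    rw [abs_of_neg (by linarith)]
    nlinarith [min_le_right (f 1 - f 0) (f (-1) - f 0)]

instance isProbabilityMeasure_nu (ζ : Measure ℝ) [IsProbabilityMeasure ζ] :
    IsProbabilityMeasure (nu ζ) := by
  unfold nu; infer_instance

theorem memLp_fst_nu_s8 (ζ : Measure ℝ) [IsProbabilityMeasure ζ] :
    MemLp Prod.fst 2 (nu ζ) :=
  (memLp_id_gaussianReal 2).comp_measurePreserving measurePreserving_fst

theorem mul_hnorm_le_of_Gcal_nonpos {ζ : Measure ℝ} {δ : ℝ} (hδ : 1 < δ) {v : ℝ × ℝ → ℝ}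
    (hv : Gcal ζ δ v ≤ 0) : √(1 - δ⁻¹) * hnorm ζ v ≤ ∫ p, v p * p.1 ∂nu ζ := by
  have hs : 0 < √(1 - δ⁻¹) := Real.sqrt_pos.2 (sub_pos.2 (inv_lt_one_of_one_lt₀ hδ))
  rw [Gcal, sub_nonpos, le_div_iff₀ hs] at hv
  linarith

theorem le_Lcal {ζ : Measure ℝ} [IsProbabilityMeasure ζ] {loss : ℝ → ℝ} {K : ℝ≥0} {c R : ℝ}
    (hK : LipschitzWith K loss) (hc : 0 ≤ c) (hgrowth : ∀ x, loss 0 + c * (|x| - 1) ≤ loss x)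
    (hR : 0 ≤ R) {v : ℝ × ℝ → ℝ} (hv : inH ζ v) :
    c * ∫ p, |v p| ∂nu ζ - (c + K) * ∫ p in {p | R < |p.2|}, |v p| ∂nu ζ - (c + (c + K) * R)
      ≤ Lcal ζ loss v := by
  set S := {p : ℝ × ℝ | R < |p.2|}
  have hS : MeasurableSet S := measurableSet_lt measurable_const measurable_snd.abs
  have hlip : ∀ a b, |loss a - loss b| ≤ K * |a - b| := by
    simpa only [Real.dist_eq] using hK.dist_le_mul
  have hK0 : (0 : ℝ) ≤ K := K.coe_nonneg
  have hpt : ∀ p : ℝ × ℝ, c * |v p| - (c + K) * S.indicator (fun p => |v p|) p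
      - (c + (c + K) * R) ≤ loss (v p + p.2) - loss p.2 := by
    intro p
    have hfar : -(K * |v p|) ≤ loss (v p + p.2) - loss p.2 :=
      neg_le_of_abs_le (by simpa using hlip (v p + p.2) p.2)
    by_cases hp : p ∈ S
    · rw [indicator_of_mem hp]
      nlinarith
    · rw [indicator_of_notMem hp]
      have hpR : |p.2| ≤ R := not_lt.1 hp
      have hv_le : |v p| ≤ |v p + p.2| + |p.2| := by simpa using abs_sub (v p + p.2) p.2
      have hnear := hgrowth (v p + p.2)
      have hZ : loss p.2 - loss 0 ≤ K * |p.2| := le_of_abs_le (by simpa using hlip p.2 0)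
      nlinarith
  have hvi : Integrable (fun p => |v p|) (nu ζ) := (hv.integrable one_le_two).abs
  have hlhs : Integrable (fun p => c * |v p| - (c + K) * S.indicator (fun p => |v p|) p) (nu ζ) :=
    (hvi.const_mul c).sub ((hvi.indicator hS).const_mul _)
  have hrhs : Integrable (fun p => loss (v p + p.2) - loss p.2) (nu ζ) :=
    hvi.const_mul K |>.mono' ((hK.continuous.comp_aestronglyMeasurable
      (hv.aestronglyMeasurable.add measurable_snd.aestronglyMeasurable)).sub
      (hK.continuous.comp_aestronglyMeasurable measurable_snd.aestronglyMeasurable))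
      (Eventually.of_forall fun p => by simpa using hlip (v p + p.2) p.2)
  calc _ = ∫ p, (c * |v p| - (c + K) * S.indicator (fun p => |v p|) p
        - (c + (c + K) * R)) ∂nu ζ := by
        rw [integral_sub hlhs (integrable_const _), integral_sub (hvi.const_mul c)
          ((hvi.indicator hS).const_mul _), integral_const_mul, integral_const_mul,
          integral_indicator hS, integral_const, probReal_univ, one_smul]
    _ ≤ Lcal ζ loss v := integral_mono (hlhs.sub (integrable_const _)) hrhs hpt

theorem stmt8_general (ζ : Measure ℝ) [IsProbabilityMeasure ζ] (loss : ℝ → ℝ) (δ : ℝ)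
    (hconv : ConvexOn ℝ Set.univ loss) (hlip : LipschitzFun loss)
    (hmin : argminIsZero loss) (hδ : 1 < δ) :
    ∃ C₁ C₂ : ℝ, 0 < C₁ ∧ 0 < C₂ ∧
      ∀ v : ℝ × ℝ → ℝ, inH ζ v → Gcal ζ δ v ≤ 0 →
        C₁ * hnorm ζ v - C₂ ≤ Lcal ζ loss v := by
  obtain ⟨c, hc, hgrowth⟩ := hconv.exists_pos_add_mul_abs_sub_one_le hmin
  obtain ⟨K, hK⟩ := hlip
  have hcK : 0 < c + K := add_pos_of_pos_of_nonneg hc K.coe_nonneg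
  obtain ⟨κ, hκ, hcone⟩ := exists_pos_mul_sqrt_integral_sq_le_integral_abs measurable_fst
    (memLp_fst_nu_s8 ζ) (Real.sqrt_pos.2 (sub_pos.2 (inv_lt_one_of_one_lt₀ hδ)))
  obtain ⟨R, hR, htail⟩ := exists_setIntegral_lt_abs_le_mul_sqrt (μ := nu ζ) measurable_snd
    (show 0 < c * κ / (2 * (c + K)) by positivity)
  refine ⟨c * κ / 2, c + (c + K) * R, by positivity, by positivity, fun v hv hG => ?_⟩
  have hL1 : κ * hnorm ζ v ≤ ∫ p, |v p| ∂nu ζ := hcone v hv (mul_hnorm_le_of_Gcal_nonpos hδ hG)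
  have hfar : (c + K) * ∫ p in {p | R < |p.2|}, |v p| ∂nu ζ ≤ c * κ / 2 * hnorm ζ v := by
    calc _ ≤ (c + K) * (c * κ / (2 * (c + K)) * hnorm ζ v) :=
          mul_le_mul_of_nonneg_left (htail v hv) hcK.le
      _ = c * κ / 2 * hnorm ζ v := by field_simp
  linarith [le_Lcal hK hc.le hgrowth hR hv, mul_le_mul_of_nonneg_left hL1 hc.le]

/-- coercivity of `Lcal` on the constraint set `{Gcal ≤ 0}`. -/
theorem stmt8 (ζ : Measure ℝ) [IsProbabilityMeasure ζ] (loss : ℝ → ℝ) (δ : ℝ)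
    (hconv : ConvexOn ℝ Set.univ loss) (hlip : LipschitzFun loss)
    (hmin : argminIsZero loss) (hδ : 1 < δ) (hZ : 0 < ζ {x : ℝ | x ≠ 0}) :
    ∃ C₁ C₂ : ℝ, 0 < C₁ ∧ 0 < C₂ ∧
      ∀ v : ℝ × ℝ → ℝ, inH ζ v → Gcal ζ δ v ≤ 0 →
        C₁ * hnorm ζ v - C₂ ≤ Lcal ζ loss v :=
  stmt8_general ζ loss δ hconv hlip hmin hδ
end
end

section
/- Let loss : ℝ → ℝ be convex with argmin loss = {0}. If loss is not Lipschitz, then there exists a probability distribution for the noise variable Z such that, for every δ > 0, the nonlinear system admits no solution (α,κ) ∈ (0,∞)²: any solution would force α to be infinite. -/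
/-!
A convex function that is not Lipschitz has unit increments `f (σ (t + 1)) - f (σ t)` that are
unbounded in one direction `σ = ±1`. Comparing the prox objective at `p = prox[κ f](x)` with its
value at `p - σ` shows that the residual `σ (x - p)` is at least `κ` times such an increment (up to
`1/2`) once `σ x` lies far enough out. Choose points `tₙ ≥ 4ⁿ` whose increment exceeds `4ⁿ` and put
mass `2^{-(n+1)}` of the noise at `σ (2 tₙ + 1)`: for `|G| ≤ 1` the squared residual then exceeds
`4ⁿ` for large `n`, so it is not integrable. The Bochner integral takes its junk value `0`, and the
first equation of the system forces `α = 0`.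
-/

open MeasureTheory ProbabilityTheory Real Set Filter

noncomputable section

section Increments

variable {f : ℝ → ℝ}

lemma ConvexOn.monotone_increment (hf : ConvexOn ℝ univ f) (σ : ℝ) :
    Monotone fun t => f (σ * (t + 1)) - f (σ * t) := by
  have hg : ConvexOn ℝ univ fun u => f (σ * u) := by
    simpa [Function.comp_def] using hf.comp_linearMap (LinearMap.lsmul ℝ ℝ σ)
  intro a b hab
  have hba : b + 1 ≠ a := by linarith
  have h₁ := hg.slope_mono (mem_univ a) ⟨mem_univ _, by simp⟩ ⟨mem_univ _, by simpa using hba⟩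
    (by linarith : a + 1 ≤ b + 1)
  have h₂ := hg.slope_mono (mem_univ (b + 1)) ⟨mem_univ _, by simpa using hba.symm⟩
    ⟨mem_univ _, by simp⟩ hab
  rw [slope_comm] at h₂
  simp only [slope_def_field, add_sub_cancel_left, sub_add_cancel_left, div_one, div_neg,
    neg_sub] at h₁ h₂
  exact h₁.trans h₂

lemma ConvexOn.abs_sub_le_of_abs_increment_le (hf : ConvexOn ℝ univ f) {M : ℝ}
    (hM : ∀ t, |f (t + 1) - f t| ≤ M) {x y : ℝ} (hxy : x < y) :
    |f y - f x| ≤ M * (y - x) := by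
  have hyx : 0 < y - x := sub_pos.mpr hxy
  have hup := hf.slope_mono_adjacent (mem_univ x) (mem_univ (y + 1)) hxy (lt_add_one y)
  have hlow := hf.slope_mono_adjacent (mem_univ (x - 1)) (mem_univ y) (sub_one_lt x) hxy
  simp only [add_sub_cancel_left, sub_sub_cancel, div_one] at hup hlow
  rw [div_le_iff₀ hyx] at hup
  rw [le_div_iff₀ hyx] at hlow
  have hMy := (abs_le.mp (hM y)).2
  have hMx := (abs_le.mp (hM (x - 1))).1
  rw [sub_add_cancel] at hMx
  exact abs_le.mpr ⟨by nlinarith, by nlinarith⟩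

lemma ConvexOn.lipschitzWith_of_abs_increment_le (hf : ConvexOn ℝ univ f) {M : ℝ}
    (hM : ∀ t, |f (t + 1) - f t| ≤ M) : LipschitzWith M.toNNReal f := by
  have hM₀ : 0 ≤ M := (abs_nonneg _).trans (hM 0)
  refine LipschitzWith.of_dist_le_mul fun x y => ?_
  rw [Real.dist_eq, Real.dist_eq, Real.coe_toNNReal M hM₀]
  rcases lt_trichotomy x y with hxy | rfl | hxy
  · rw [abs_sub_comm, abs_sub_comm x, abs_of_pos (sub_pos.mpr hxy)]
    exact hf.abs_sub_le_of_abs_increment_le hM hxy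
  · simp
  · rw [abs_of_pos (sub_pos.mpr hxy)]
    exact hf.abs_sub_le_of_abs_increment_le hM hxy

lemma ConvexOn.exists_unbounded_increment (hf : ConvexOn ℝ univ f) (hf' : ¬ LipschitzFun f) :
    ∃ σ : ℝ, σ ^ 2 = 1 ∧ ∀ M, ∃ t, M ≤ f (σ * (t + 1)) - f (σ * t) := by
  by_contra! h
  obtain ⟨M₁, hM₁⟩ := h 1 (one_pow 2)
  obtain ⟨M₂, hM₂⟩ := h (-1) (by norm_num)
  refine hf' ⟨_, hf.lipschitzWith_of_abs_increment_le (M := max M₁ M₂) fun t =>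
    abs_le.mpr ⟨?_, ?_⟩⟩
  · have := hM₂ (-(t + 1))
    rw [show -1 * (-(t + 1) + 1) = t by ring, show -1 * -(t + 1) = t + 1 by ring] at this
    linarith [le_max_right M₁ M₂]
  · have := hM₁ t
    simp only [one_mul] at this
    linarith [le_max_left M₁ M₂]

end Increments

section Prox

variable {f : ℝ → ℝ} {κ : ℝ}

lemma ConvexOn.subderiv_nonempty (hf : ConvexOn ℝ univ f) (x : ℝ) : (subderiv f x).Nonempty := by
  have hx : x ∈ interior univ := by simp
  refine ⟨derivWithin f (Ioi x) x, fun y => ?_⟩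
  rcases lt_trichotomy x y with hxy | rfl | hxy
  · have h := hf.rightDeriv_le_slope_of_mem_interior hx (mem_univ y) hxy
    rw [slope_def_field, le_div_iff₀ (sub_pos.mpr hxy)] at h
    linarith
  · simp
  · have h := (hf.slope_le_leftDeriv_of_mem_interior (mem_univ y) hx hxy).trans
      (hf.leftDeriv_le_rightDeriv_of_mem_interior hx)
    rw [slope_def_field, div_le_iff₀ (sub_pos.mpr hxy)] at h
    linarith

lemma ConvexOn.exists_forall_prox_objective_le (hf : ConvexOn ℝ univ f) (hκ : 0 ≤ κ) (x : ℝ) :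
    ∃ p, ∀ y, κ * f p + (x - p) ^ 2 / 2 ≤ κ * f y + (x - y) ^ 2 / 2 := by
  have hcont : Continuous f := continuousOn_univ.mp (hf.continuousOn isOpen_univ)
  obtain ⟨b, hb⟩ := hf.subderiv_nonempty 0
  set C := (κ * b - x) ^ 2 - κ * f 0 - x ^ 2 / 2 with hC
  have hlow : ∀ y, y ^ 2 / 4 - C ≤ κ * f y + (x - y) ^ 2 / 2 := fun y => by
    have := mul_le_mul_of_nonneg_left (hb y) hκ
    nlinarith [sq_nonneg (y / 2 + (κ * b - x))]
  have hlim : Tendsto (fun y : ℝ => y ^ 2 / 4 - C) (cocompact ℝ) atTop := by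
    have h := (tendsto_atTop_add_const_right _ (-C)
      ((tendsto_pow_atTop two_ne_zero).atTop_div_const (by norm_num : (0:ℝ) < 4))).comp
      (tendsto_norm_cocompact_atTop (E := ℝ))
    simpa [Function.comp_def, sub_eq_add_neg] using h
  exact Continuous.exists_forall_le (by fun_prop) (tendsto_atTop_mono hlow hlim)

lemma prox_objective_le (hf : ConvexOn ℝ univ f) (hκ : 0 ≤ κ) (x y : ℝ) :
    κ * f (prox κ f x) + (x - prox κ f x) ^ 2 / 2 ≤ κ * f y + (x - y) ^ 2 / 2 :=
  Classical.epsilon_spec (hf.exists_forall_prox_objective_le hκ x) y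

lemma le_mul_sub_prox (hf : ConvexOn ℝ univ f) (hκ : 0 ≤ κ) (x h : ℝ) :
    κ * (f (prox κ f x) - f (prox κ f x - h)) - h ^ 2 / 2 ≤ h * (x - prox κ f x) := by
  have := prox_objective_le hf hκ x (prox κ f x - h)
  nlinarith

lemma min_le_mul_sub_prox (hf : ConvexOn ℝ univ f) (hκ : 0 ≤ κ) {σ : ℝ} (hσ : σ ^ 2 = 1)
    (t x : ℝ) :
    min (σ * x - (t + 1)) (κ * (f (σ * (t + 1)) - f (σ * t)) - 1 / 2) ≤
      σ * (x - prox κ f x) := by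
  set p := prox κ f x
  by_cases htp : t + 1 ≤ σ * p
  · have hmono := hf.monotone_increment σ (by linarith : t ≤ σ * p - 1)
    have hp : σ * (σ * p - 1 + 1) = p := by linear_combination p * hσ
    have hpσ : σ * (σ * p - 1) = p - σ := by linear_combination p * hσ
    simp only [hp, hpσ] at hmono
    calc min (σ * x - (t + 1)) (κ * (f (σ * (t + 1)) - f (σ * t)) - 1 / 2)
        ≤ κ * (f (σ * (t + 1)) - f (σ * t)) - 1 / 2 := min_le_right _ _
      _ ≤ κ * (f p - f (p - σ)) - σ ^ 2 / 2 := by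
        rw [hσ]; gcongr
      _ ≤ σ * (x - p) := le_mul_sub_prox hf hκ x σ
  · calc min (σ * x - (t + 1)) (κ * (f (σ * (t + 1)) - f (σ * t)) - 1 / 2)
        ≤ σ * x - (t + 1) := min_le_left _ _
      _ ≤ σ * (x - p) := by linarith

end Prox

section Noise

def geometricAtoms (c : ℕ → ℝ) : Measure ℝ :=
  (geometricMeasure ⟨1 / 2, by norm_num, by norm_num⟩).map c

instance (c : ℕ → ℝ) : IsProbabilityMeasure (geometricAtoms c) :=
  Measure.isProbabilityMeasure_map (Measurable.of_discrete).aemeasurable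

lemma geometricAtoms_real_singleton_ge (c : ℕ → ℝ) (n : ℕ) :
    (1 / 2 : ℝ) ^ (n + 1) ≤ (geometricAtoms c).real {c n} := by
  have hp : (⟨1 / 2, by norm_num, by norm_num⟩ : unitInterval) ≠ 0 := by
    simp [← Subtype.coe_ne_coe]
  rw [geometricAtoms, map_measureReal_apply Measurable.of_discrete (measurableSet_singleton _)]
  calc (1 / 2 : ℝ) ^ (n + 1) = (geometricMeasure ⟨1 / 2, by norm_num, by norm_num⟩).real {n} := by
        rw [geometricMeasure_real_singleton hp]; norm_num [pow_succ]
    _ ≤ _ := measureReal_mono (by simp)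

lemma not_integrable_prod_of_four_pow_le {X : Type*} [MeasurableSpace X] {μ : Measure X}
    {ν : Measure ℝ} [IsFiniteMeasure μ] [IsFiniteMeasure ν] {A : Set X} (hA : MeasurableSet A)
    (hμA : μ A ≠ 0) {c : ℕ → ℝ} (hν : ∀ n, (1 / 2 : ℝ) ^ (n + 1) ≤ ν.real {c n})
    {F : X × ℝ → ℝ} (hF : ∀ p, 0 ≤ F p) (hFc : ∀ᶠ n in atTop, ∀ g ∈ A, (4 : ℝ) ^ n ≤ F (g, c n)) :
    ¬ Integrable F (μ.prod ν) := by
  intro hint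
  have hγ : 0 < μ.real A := ENNReal.toReal_pos hμA (measure_ne_top _ _)
  have hbound : ∀ᶠ n in atTop, μ.real A / 2 * 2 ^ n ≤ ∫ p, F p ∂(μ.prod ν) := by
    filter_upwards [hFc] with n hn
    calc μ.real A / 2 * 2 ^ n = 4 ^ n * (μ.real A * (1 / 2) ^ (n + 1)) := by
          rw [show (4 : ℝ) = 2 * 2 by norm_num, mul_pow, pow_succ, one_div_pow]
          field_simp
      _ ≤ 4 ^ n * (μ.prod ν).real (A ×ˢ {c n}) := by
          rw [measureReal_prod_prod]; gcongr; exact hν n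
      _ ≤ ∫ p in A ×ˢ {c n}, F p ∂(μ.prod ν) := by
          refine setIntegral_ge_of_const_le_real (hA.prod (measurableSet_singleton _))
            (measure_ne_top _ _) ?_ hint.integrableOn
          rintro ⟨g, z⟩ ⟨hg, rfl : z = c n⟩
          exact hn g hg
      _ ≤ ∫ p, F p ∂(μ.prod ν) := setIntegral_le_integral hint (ae_of_all _ hF)
  have hlim : Tendsto (fun n : ℕ => μ.real A / 2 * 2 ^ n) atTop atTop :=
    (tendsto_pow_atTop_atTop_of_one_lt one_lt_two).const_mul_atTop (half_pos hγ)
  obtain ⟨n, hn, hn'⟩ := (hbound.and (hlim.eventually_gt_atTop (∫ p, F p ∂(μ.prod ν)))).exists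
  linarith

end Noise

lemma eventually_two_pow_le_mul_four_pow_sub {c : ℝ} (hc : 0 < c) (d : ℝ) :
    ∀ᶠ n : ℕ in atTop, (2 : ℝ) ^ n ≤ c * 4 ^ n - d := by
  have h := (tendsto_pow_atTop_atTop_of_one_lt one_lt_two).const_mul_atTop hc
  filter_upwards [h.eventually_ge_atTop (|d| + 1)] with n hn
  have h₁ : (1 : ℝ) ≤ 2 ^ n := one_le_pow₀ one_le_two
  rw [show (4 : ℝ) ^ n = 2 ^ n * 2 ^ n by rw [← mul_pow]; norm_num]
  nlinarith [le_abs_self d, abs_nonneg d,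
    mul_le_mul_of_nonneg_right hn (by positivity : (0 : ℝ) ≤ 2 ^ n)]

lemma eventually_four_pow_le_sq_sub_prox {f : ℝ → ℝ} (hf : ConvexOn ℝ univ f) {σ : ℝ}
    (hσ : σ ^ 2 = 1) {t : ℕ → ℝ} (ht : ∀ n, 4 ^ n ≤ t n)
    (hinc : ∀ n, 4 ^ n ≤ f (σ * (t n + 1)) - f (σ * t n)) {α κ : ℝ} (hα : 0 ≤ α) (hκ : 0 < κ) :
    ∀ᶠ n in atTop, ∀ g ∈ Icc (-1 : ℝ) 1,
      (4 : ℝ) ^ n ≤ (α * g + σ * (2 * t n + 1) - prox κ f (α * g + σ * (2 * t n + 1))) ^ 2 := by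
  filter_upwards [eventually_two_pow_le_mul_four_pow_sub one_pos α,
    eventually_two_pow_le_mul_four_pow_sub hκ (1 / 2)] with n h₁ h₂ g hg
  set x := α * g + σ * (2 * t n + 1)
  have hσg : -1 ≤ σ * g := by
    refine (abs_le.mp ((sq_le_one_iff_abs_le_one _).mp ?_)).1
    rw [mul_pow, hσ, one_mul]
    nlinarith [hg.1, hg.2]
  have hσx : σ * x = α * (σ * g) + (2 * t n + 1) := by linear_combination (2 * t n + 1) * hσ
  have hres : (2 : ℝ) ^ n ≤ σ * (x - prox κ f x) := by
    refine le_trans (le_min ?_ ?_) (min_le_mul_sub_prox hf hκ.le hσ (t n) x)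
    · nlinarith [ht n]
    · nlinarith [hinc n]
  calc (4 : ℝ) ^ n = ((2 : ℝ) ^ n) ^ 2 := by rw [← pow_mul, mul_comm, pow_mul]; norm_num
    _ ≤ (σ * (x - prox κ f x)) ^ 2 := pow_le_pow_left₀ (by positivity) hres 2
    _ = (x - prox κ f x) ^ 2 := by rw [mul_pow, hσ, one_mul]

theorem stmt11_general (loss : ℝ → ℝ) (hconv : ConvexOn ℝ Set.univ loss)
    (hnotlip : ¬ LipschitzFun loss) :
    ∃ ζ : Measure ℝ, IsProbabilityMeasure ζ ∧
      ∀ δ : ℝ, 0 < δ →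
        ∀ α κ : ℝ, 0 < α → 0 < κ → ¬ solvesSystem ζ loss δ α κ := by
  obtain ⟨σ, hσ, hsteep⟩ := hconv.exists_unbounded_increment hnotlip
  have hchoice (n : ℕ) :
      ∃ t, (4 : ℝ) ^ n ≤ t ∧ (4 : ℝ) ^ n ≤ loss (σ * (t + 1)) - loss (σ * t) := by
    obtain ⟨t, ht⟩ := hsteep (4 ^ n)
    exact ⟨max t (4 ^ n), le_max_right _ _,
      ht.trans (hconv.monotone_increment σ (le_max_left _ _))⟩
  choose t ht hinc using hchoice
  refine ⟨geometricAtoms fun n => σ * (2 * t n + 1), inferInstance,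
    fun δ _ α κ hα hκ hsys => ?_⟩
  have hgauss : gaussianReal 0 1 (Icc (-1) 1) ≠ 0 := fun h => by
    have := gaussianReal_absolutelyContinuous' 0 one_ne_zero h
    norm_num at this
  have hint := not_integrable_prod_of_four_pow_le
    (F := fun p => (α * p.1 + p.2 - prox κ loss (α * p.1 + p.2)) ^ 2) measurableSet_Icc hgauss
    (geometricAtoms_real_singleton_ge _) (fun _ => sq_nonneg _)
    (eventually_four_pow_le_sq_sub_prox hconv hσ ht hinc hα.le hκ)
  have h := hsys.1
  rw [nu, integral_undef hint, mul_zero] at h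
  exact hα.ne' (pow_eq_zero_iff two_ne_zero |>.mp h)

/-- if `loss` is convex with `argmin loss = {0}` but not Lipschitz, there is a
noise distribution for which the nonlinear system has no solution `(α, κ) ∈ (0,∞)²`. -/
theorem stmt11 (loss : ℝ → ℝ) (hconv : ConvexOn ℝ Set.univ loss)
    (hmin : argminIsZero loss) (hnotlip : ¬ LipschitzFun loss) :
    ∃ ζ : Measure ℝ, IsProbabilityMeasure ζ ∧
      ∀ δ : ℝ, 0 < δ →
        ∀ α κ : ℝ, 0 < α → 0 < κ → ¬ solvesSystem ζ loss δ α κ :=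
  stmt11_general loss hconv hnotlip

end
end
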